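/- (Classification of singularities, removable case.) Assume i₁, i₂, i₃ are linearly independent over ℝ and f₁(E₃) = f₂(E₃) = ℂ. Let ζ₀ ∈ E₃, ξ₁₀ = f₁(ζ₀), ξ₂₀ = f₂(ζ₀), 0 < R ≤ ∞. Let F₁, F₃ be holomorphic on the punctured disk {ξ : 0 < |ξ − ξ₁₀| < R} and F₂, F₄ holomorphic on {ξ : 0 < |ξ − ξ₂₀| < R}, and define Φ on K⁰_ζ = {ζ ∈ E₃ : 0 < |f₁(ζ) − ξ₁₀| < R, 0 < |f₂(ζ) − ξ₂₀| < R} by Φ(ζ) = F₁(f₁(ζ))e₁ + F₂(f₂(ζ))e₂ + F₃(f₁(ζ))e₃ + F₄(f₂(ζ))e₄. If all Laurent coefficients of F₁, F₂, F₃, F₄ of negative index vanish (i.e., the Laurent expansion of Φ has no principal part), then at every point w ∈ K̃⁰_ζ = {ζ ∈ E₃ : |f₁(ζ) − ξ₁₀| < R, |f₂(ζ) − ξ₂₀| < R} of the form w = ζ₀ + e* with e* ∈ L¹_ζ ∪ L²_ζ, the mapping Φ has a finite limit as ζ → w with ζ ranging over K⁰_ζ. -/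

import Mathlib

noncomputable section

/-- The algebra of complex quaternions ℍ(ℂ): quaternions over ℂ with
I² = J² = K² = -1, IJ = -JI = K, JK = -KJ = I, KI = -IK = J. -/
abbrev HC : Type := Quaternion ℂ

/-- The quaternion unit I. -/
def Iq : HC := ⟨0, 1, 0, 0⟩
/-- The quaternion unit J. -/
def Jq : HC := ⟨0, 0, 1, 0⟩
/-- The quaternion unit K. -/
def Kq : HC := ⟨0, 0, 0, 1⟩

/-- e₁ = (1 + iI)/2. -/
def e1 : HC := (2 : ℂ)⁻¹ • (1 + Complex.I • Iq)
/-- e₂ = (1 - iI)/2. -/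
def e2 : HC := (2 : ℂ)⁻¹ • (1 - Complex.I • Iq)
/-- e₃ = (iJ - K)/2. -/
def e3 : HC := (2 : ℂ)⁻¹ • (Complex.I • Jq - Kq)
/-- e₄ = (iJ + K)/2. -/
def e4 : HC := (2 : ℂ)⁻¹ • (Complex.I • Jq + Kq)

/-- The coefficient c₁ of q in the basis {e₁,e₂,e₃,e₄} (q = c₁e₁ + c₂e₂ + c₃e₃ + c₄e₄). -/
def coord1 (q : HC) : ℂ := q.re - Complex.I * q.imI
/-- The coefficient c₂ of q in the basis {e₁,e₂,e₃,e₄}. -/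
def coord2 (q : HC) : ℂ := q.re + Complex.I * q.imI
/-- The coefficient c₃ of q in the basis {e₁,e₂,e₃,e₄}. -/
def coord3 (q : HC) : ℂ := -(Complex.I * q.imJ) - q.imK
/-- The coefficient c₄ of q in the basis {e₁,e₂,e₃,e₄}. -/
def coord4 (q : HC) : ℂ := -(Complex.I * q.imJ) + q.imK

/-- The norm ‖c‖ = √(|c₁|² + |c₂|² + |c₃|² + |c₄|²) of c = c₁e₁ + c₂e₂ + c₃e₃ + c₄e₄. -/
def hnorm (q : HC) : ℝ :=
  Real.sqrt (‖coord1 q‖ ^ 2 + ‖coord2 q‖ ^ 2 +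
    ‖coord3 q‖ ^ 2 + ‖coord4 q‖ ^ 2)

/-- i₂ = a₁e₁ + a₂e₂. -/
def i2 (a₁ a₂ : ℂ) : HC := a₁ • e1 + a₂ • e2
/-- i₃ = b₁e₁ + b₂e₂. -/
def i3 (b₁ b₂ : ℂ) : HC := b₁ • e1 + b₂ • e2

/-- ζ = x·i₁ + y·i₂ + z·i₃ with i₁ = 1. -/
def zeta (a₁ a₂ b₁ b₂ : ℂ) (x y z : ℝ) : HC :=
  (x : ℂ) • (1 : HC) + (y : ℂ) • i2 a₁ a₂ + (z : ℂ) • i3 b₁ b₂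

/-- E₃ = {x i₁ + y i₂ + z i₃ : x, y, z ∈ ℝ}. -/
def E3 (a₁ a₂ b₁ b₂ : ℂ) : Set HC :=
  {q | ∃ x y z : ℝ, q = zeta a₁ a₂ b₁ b₂ x y z}

/-- ξ₁ = f₁(ζ) = x + y a₁ + z b₁. -/
def xi1 (a₁ b₁ : ℂ) (x y z : ℝ) : ℂ := (x : ℂ) + (y : ℂ) * a₁ + (z : ℂ) * b₁
/-- ξ₂ = f₂(ζ) = x + y a₂ + z b₂. -/
def xi2 (a₂ b₂ : ℂ) (x y z : ℝ) : ℂ := (x : ℂ) + (y : ℂ) * a₂ + (z : ℂ) * b₂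


/-- The punctured domain K⁰_ζ = {ζ ∈ E₃ : 0 < |f₁(ζ)-ξ₁₀| < R, 0 < |f₂(ζ)-ξ₂₀| < R}. -/
def K0 (a₁ a₂ b₁ b₂ ξ₁₀ ξ₂₀ : ℂ) (R : ENNReal) : Set HC :=
  {q | ∃ x y z : ℝ, q = zeta a₁ a₂ b₁ b₂ x y z ∧
    0 < ‖xi1 a₁ b₁ x y z - ξ₁₀‖ ∧
    ENNReal.ofReal (‖xi1 a₁ b₁ x y z - ξ₁₀‖) < R ∧
    0 < ‖xi2 a₂ b₂ x y z - ξ₂₀‖ ∧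
    ENNReal.ofReal (‖xi2 a₂ b₂ x y z - ξ₂₀‖) < R}

/-- Φ has the finite limit A as ζ → w with ζ ranging over S (w.r.t. the norm of ℍ(ℂ)). -/
def TendstoAt (Φ : HC → HC) (S : Set HC) (w A : HC) : Prop :=
  ∀ ε > (0 : ℝ), ∃ δ > (0 : ℝ), ∀ q ∈ S, hnorm (q - w) < δ → hnorm (Φ q - A) < ε

/-- ‖Φ(ζ)‖ → ∞ as ζ → w with ζ ranging over S. -/
def TendstoInftyAt (Φ : HC → HC) (S : Set HC) (w : HC) : Prop :=
  ∀ M : ℝ, ∃ δ > (0 : ℝ), ∀ q ∈ S, hnorm (q - w) < δ → M < hnorm (Φ q)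

/-!
Without a principal part each Laurent series is a power series, and its radius of convergence
is at least `R` because it converges on the punctured disk of radius `R`. Its sum is continuous
on the whole disk, so every `Fₖ` has a limit at every point of the disk, the centre included.
In the basis `e₁, e₂, e₃, e₄` the point `ζ ∈ E₃` has coordinates `(f₁ ζ, f₂ ζ, 0, 0)` and
`Φ ζ` has coordinates `(F₁ (f₁ ζ), F₂ (f₂ ζ), F₃ (f₁ ζ), F₄ (f₂ ζ))`; the norm of `ℍ(ℂ)` dominates
each coordinate and is dominated by their sum, so `Φ` converges coordinatewise.
-/

open Filter Topology Metric ENNReal Set FormalMultilinearSeries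

theorem HasSum.nat_of_int {M : Type*} [AddCommMonoid M] [TopologicalSpace M] {f : ℤ → M} {s : M}
    (h : HasSum f s) (hf : ∀ n < 0, f n = 0) : HasSum (fun n : ℕ => f n) s := by
  refine (Nat.cast_injective.hasSum_iff fun n hn => hf n ?_).2 h
  by_contra! hn'
  exact hn ⟨n.toNat, Int.toNat_of_nonneg hn'⟩

theorem mem_eball_iff_ofReal_norm_sub {E : Type*} [SeminormedAddCommGroup E] {c ξ : E}
    {R : ℝ≥0∞} : ξ ∈ eball c R ↔ ENNReal.ofReal ‖ξ - c‖ < R := by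
  rw [mem_eball, edist_dist, dist_eq_norm]

theorem mem_eball_diff_singleton_iff {E : Type*} [NormedAddCommGroup E] {c ξ : E} {R : ℝ≥0∞} :
    ξ ∈ eball c R \ {c} ↔ 0 < ‖ξ - c‖ ∧ ENNReal.ofReal ‖ξ - c‖ < R := by
  rw [Set.mem_sdiff, mem_eball_iff_ofReal_norm_sub, mem_singleton_iff, norm_pos_iff, sub_ne_zero,
    and_comm]

section PowerSeries

variable {𝕜 : Type*} [RCLike 𝕜]

theorem le_radius_ofScalars {a : ℕ → 𝕜} {R : ℝ≥0∞}
    (h : ∀ w ∈ eball (0 : 𝕜) R \ {0}, Summable fun n => a n * w ^ n) :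
    R ≤ (ofScalars 𝕜 a).radius := by
  refine ENNReal.le_of_forall_nnreal_lt fun r hr => ?_
  rcases eq_or_ne r 0 with rfl | hr₀
  · simp
  have hw : ((r : ℝ) : 𝕜) ∈ eball (0 : 𝕜) R \ {0} := by
    refine ⟨?_, by simpa using hr₀⟩
    rwa [mem_eball_iff_ofReal_norm_sub, sub_zero, RCLike.norm_ofReal, abs_of_nonneg r.coe_nonneg,
      ofReal_coe_nnreal]
  refine le_radius_of_tendsto _ (l := 0) ?_
  simpa [norm_mul, abs_of_nonneg r.coe_nonneg] using (h _ hw).tendsto_atTop_zero.norm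

theorem exists_tendsto_of_hasSum_pow {a : ℕ → 𝕜} {c : 𝕜} {R : ℝ≥0∞} {F : 𝕜 → 𝕜}
    (h : ∀ ξ ∈ eball c R \ {c}, HasSum (fun n => a n * (ξ - c) ^ n) (F ξ))
    {s : 𝕜} (hs : s ∈ eball c R) : ∃ L, Tendsto F (𝓝[eball c R \ {c}] s) (𝓝 L) := by
  have hR : R ≤ (ofScalars 𝕜 a).radius := by
    refine le_radius_ofScalars fun w hw => (h (w + c) ?_).summable.congr fun n => by simp
    simpa [mem_eball, edist_dist, dist_eq_norm] using hw
  set p := ofScalars 𝕜 a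
  have hmaps : ∀ ξ ∈ eball c R, ξ - c ∈ eball (0 : 𝕜) p.radius := fun ξ hξ =>
    mem_eball_iff_ofReal_norm_sub.2 <| by
      rw [sub_zero]; exact (mem_eball_iff_ofReal_norm_sub.1 hξ).trans_le hR
  have hcont : ContinuousAt (fun ξ => p.sum (ξ - c)) s :=
    ContinuousAt.comp (g := p.sum) (f := fun ξ => ξ - c)
      (p.continuousOn.continuousAt (isOpen_eball.mem_nhds (hmaps s hs))) (by fun_prop)
  have heq : Set.EqOn F (fun ξ => p.sum (ξ - c)) (eball c R \ {c}) := fun ξ hξ =>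
    (h ξ hξ).unique (by simpa [p, ofScalars_apply_eq, mul_comm] using p.hasSum (hmaps ξ hξ.1))
  exact ⟨_, (hcont.tendsto.mono_left nhdsWithin_le_nhds).congr'
    (eventuallyEq_nhdsWithin_of_eqOn heq).symm⟩

theorem exists_tendsto_of_hasSum_laurent {a : ℤ → 𝕜} {c : 𝕜} {R : ℝ≥0∞} {F : 𝕜 → 𝕜}
    (hneg : ∀ n < 0, a n = 0)
    (h : ∀ ξ ∈ eball c R \ {c}, HasSum (fun n : ℤ => a n * (ξ - c) ^ n) (F ξ))
    {s : 𝕜} (hs : s ∈ eball c R) : ∃ L, Tendsto F (𝓝[eball c R \ {c}] s) (𝓝 L) :=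
  exists_tendsto_of_hasSum_pow
    (fun ξ hξ => by simpa using (h ξ hξ).nat_of_int fun n hn => by simp [hneg n hn]) hs

end PowerSeries

def ofECoords (c₁ c₂ c₃ c₄ : ℂ) : HC := c₁ • e1 + c₂ • e2 + c₃ • e3 + c₄ • e4

theorem ofECoords_eq (c₁ c₂ c₃ c₄ : ℂ) :
    ofECoords c₁ c₂ c₃ c₄ =
      ⟨(c₁ + c₂) / 2, Complex.I * (c₁ - c₂) / 2, Complex.I * (c₃ + c₄) / 2, (c₄ - c₃) / 2⟩ := by
  ext <;> simp [ofECoords, e1, e2, e3, e4, Quaternion.re_one, Quaternion.imI_one,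
    Quaternion.imJ_one, Quaternion.imK_one] <;> simp [Iq, Jq, Kq] <;> ring

@[simp] theorem coord1_ofECoords (c₁ c₂ c₃ c₄ : ℂ) : coord1 (ofECoords c₁ c₂ c₃ c₄) = c₁ := by
  simp only [ofECoords_eq, coord1]; linear_combination (c₂ - c₁) / 2 * Complex.I_sq
@[simp] theorem coord2_ofECoords (c₁ c₂ c₃ c₄ : ℂ) : coord2 (ofECoords c₁ c₂ c₃ c₄) = c₂ := by
  simp only [ofECoords_eq, coord2]; linear_combination (c₁ - c₂) / 2 * Complex.I_sq
@[simp] theorem coord3_ofECoords (c₁ c₂ c₃ c₄ : ℂ) : coord3 (ofECoords c₁ c₂ c₃ c₄) = c₃ := by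
  simp only [ofECoords_eq, coord3]; linear_combination -(c₃ + c₄) / 2 * Complex.I_sq
@[simp] theorem coord4_ofECoords (c₁ c₂ c₃ c₄ : ℂ) : coord4 (ofECoords c₁ c₂ c₃ c₄) = c₄ := by
  simp only [ofECoords_eq, coord4]; linear_combination -(c₃ + c₄) / 2 * Complex.I_sq

theorem ofECoords_sub (c₁ c₂ c₃ c₄ d₁ d₂ d₃ d₄ : ℂ) :
    ofECoords c₁ c₂ c₃ c₄ - ofECoords d₁ d₂ d₃ d₄ =
      ofECoords (c₁ - d₁) (c₂ - d₂) (c₃ - d₃) (c₄ - d₄) := by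
  simp only [ofECoords]; module

theorem e1_add_e2 : e1 + e2 = 1 := by
  ext <;> simp [e1, e2, Quaternion.re_one, Quaternion.imI_one, Quaternion.imJ_one,
    Quaternion.imK_one]
  all_goals norm_num [Iq]

theorem zeta_eq_ofECoords (a₁ a₂ b₁ b₂ : ℂ) (x y z : ℝ) :
    zeta a₁ a₂ b₁ b₂ x y z = ofECoords (xi1 a₁ b₁ x y z) (xi2 a₂ b₂ x y z) 0 0 := by
  rw [zeta, i2, i3, xi1, xi2, ofECoords, ← e1_add_e2]
  module

@[simp] theorem coord1_zeta (a₁ a₂ b₁ b₂ : ℂ) (x y z : ℝ) :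
    coord1 (zeta a₁ a₂ b₁ b₂ x y z) = xi1 a₁ b₁ x y z := by
  simp [zeta_eq_ofECoords]

@[simp] theorem coord2_zeta (a₁ a₂ b₁ b₂ : ℂ) (x y z : ℝ) :
    coord2 (zeta a₁ a₂ b₁ b₂ x y z) = xi2 a₂ b₂ x y z := by
  simp [zeta_eq_ofECoords]

theorem coord1_add (p q : HC) : coord1 (p + q) = coord1 p + coord1 q := by
  simp only [coord1, Quaternion.re_add, Quaternion.imI_add]; ring

theorem coord2_add (p q : HC) : coord2 (p + q) = coord2 p + coord2 q := by
  simp only [coord2, Quaternion.re_add, Quaternion.imI_add]; ring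

theorem coord1_sub (p q : HC) : coord1 (p - q) = coord1 p - coord1 q := by
  simp only [coord1, Quaternion.re_sub, Quaternion.imI_sub]; ring

theorem coord2_sub (p q : HC) : coord2 (p - q) = coord2 p - coord2 q := by
  simp only [coord2, Quaternion.re_sub, Quaternion.imI_sub]; ring

theorem hnorm_nonneg (q : HC) : 0 ≤ hnorm q := Real.sqrt_nonneg _

theorem norm_coord1_le_hnorm (q : HC) : ‖coord1 q‖ ≤ hnorm q := by
  rw [hnorm, Real.le_sqrt (norm_nonneg _) (by positivity)]
  nlinarith [norm_nonneg (coord2 q), norm_nonneg (coord3 q), norm_nonneg (coord4 q)]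

theorem norm_coord2_le_hnorm (q : HC) : ‖coord2 q‖ ≤ hnorm q := by
  rw [hnorm, Real.le_sqrt (norm_nonneg _) (by positivity)]
  nlinarith [norm_nonneg (coord1 q), norm_nonneg (coord3 q), norm_nonneg (coord4 q)]

theorem hnorm_ofECoords_le (c₁ c₂ c₃ c₄ : ℂ) :
    hnorm (ofECoords c₁ c₂ c₃ c₄) ≤ ‖c₁‖ + ‖c₂‖ + ‖c₃‖ + ‖c₄‖ := by
  rw [hnorm, coord1_ofECoords, coord2_ofECoords, coord3_ofECoords, coord4_ofECoords,
    Real.sqrt_le_left (by positivity)]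
  nlinarith [norm_nonneg c₁, norm_nonneg c₂, norm_nonneg c₃, norm_nonneg c₄]

def hnhdsWithin (w : HC) (S : Set HC) : Filter HC :=
  comap (fun q => hnorm (q - w)) (𝓝 0) ⊓ 𝓟 S

theorem eventually_mem_hnhdsWithin (w : HC) (S : Set HC) : ∀ᶠ q in hnhdsWithin w S, q ∈ S :=
  mem_inf_of_right (mem_principal_self S)

theorem tendsto_hnorm_sub_hnhdsWithin (w : HC) (S : Set HC) :
    Tendsto (fun q => hnorm (q - w)) (hnhdsWithin w S) (𝓝 0) :=
  tendsto_comap.mono_left inf_le_left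

theorem tendstoAt_of_tendsto_hnorm {Φ : HC → HC} {S : Set HC} {w A : HC}
    (h : Tendsto (fun q => hnorm (Φ q - A)) (hnhdsWithin w S) (𝓝 0)) : TendstoAt Φ S w A := by
  intro ε hε
  obtain ⟨δ, hδ, hball⟩ :=
    (((nhds_basis_ball.comap _).inf_principal S).tendsto_iff nhds_basis_ball).1 h ε hε
  refine ⟨δ, hδ, fun q hq hqw => ?_⟩
  simpa [abs_of_nonneg (hnorm_nonneg _)] using
    hball q ⟨by simpa [abs_of_nonneg (hnorm_nonneg _)] using hqw, hq⟩

theorem tendsto_coord1_hnhdsWithin (w : HC) (S : Set HC) :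
    Tendsto coord1 (hnhdsWithin w S) (𝓝 (coord1 w)) :=
  tendsto_iff_norm_sub_tendsto_zero.2 <| squeeze_zero (fun _ => norm_nonneg _)
    (fun q => coord1_sub q w ▸ norm_coord1_le_hnorm _) (tendsto_hnorm_sub_hnhdsWithin w S)

theorem tendsto_coord2_hnhdsWithin (w : HC) (S : Set HC) :
    Tendsto coord2 (hnhdsWithin w S) (𝓝 (coord2 w)) :=
  tendsto_iff_norm_sub_tendsto_zero.2 <| squeeze_zero (fun _ => norm_nonneg _)
    (fun q => coord2_sub q w ▸ norm_coord2_le_hnorm _) (tendsto_hnorm_sub_hnhdsWithin w S)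

theorem tendstoAt_ofECoords {Φ : HC → HC} {S : Set HC} {w : HC} {g₁ g₂ g₃ g₄ : HC → ℂ}
    {L₁ L₂ L₃ L₄ : ℂ} (hΦ : ∀ q ∈ S, Φ q = ofECoords (g₁ q) (g₂ q) (g₃ q) (g₄ q))
    (h₁ : Tendsto g₁ (hnhdsWithin w S) (𝓝 L₁)) (h₂ : Tendsto g₂ (hnhdsWithin w S) (𝓝 L₂))
    (h₃ : Tendsto g₃ (hnhdsWithin w S) (𝓝 L₃)) (h₄ : Tendsto g₄ (hnhdsWithin w S) (𝓝 L₄)) :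
    TendstoAt Φ S w (ofECoords L₁ L₂ L₃ L₄) := by
  refine tendstoAt_of_tendsto_hnorm <|
    squeeze_zero' (.of_forall fun _ => hnorm_nonneg _) ?_ (g := fun q =>
      ‖g₁ q - L₁‖ + ‖g₂ q - L₂‖ + ‖g₃ q - L₃‖ + ‖g₄ q - L₄‖) ?_
  · filter_upwards [eventually_mem_hnhdsWithin w S] with q hq
    rw [hΦ q hq, ofECoords_sub]
    exact hnorm_ofECoords_le _ _ _ _
  · simpa using ((((tendsto_iff_norm_sub_tendsto_zero.1 h₁).add
      (tendsto_iff_norm_sub_tendsto_zero.1 h₂)).add (tendsto_iff_norm_sub_tendsto_zero.1 h₃)).add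
      (tendsto_iff_norm_sub_tendsto_zero.1 h₄))

section K0

variable {a₁ a₂ b₁ b₂ ξ₁₀ ξ₂₀ : ℂ} {R : ℝ≥0∞}

theorem coord1_mem_of_mem_K0 {q : HC} (hq : q ∈ K0 a₁ a₂ b₁ b₂ ξ₁₀ ξ₂₀ R) :
    coord1 q ∈ eball ξ₁₀ R \ {ξ₁₀} := by
  obtain ⟨x, y, z, rfl, h₁, h₁', -⟩ := hq
  exact coord1_zeta .. ▸ mem_eball_diff_singleton_iff.2 ⟨h₁, h₁'⟩

theorem coord2_mem_of_mem_K0 {q : HC} (hq : q ∈ K0 a₁ a₂ b₁ b₂ ξ₁₀ ξ₂₀ R) :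
    coord2 q ∈ eball ξ₂₀ R \ {ξ₂₀} := by
  obtain ⟨x, y, z, rfl, -, -, h₂, h₂'⟩ := hq
  exact coord2_zeta .. ▸ mem_eball_diff_singleton_iff.2 ⟨h₂, h₂'⟩

theorem tendsto_coord1_K0 (w : HC) :
    Tendsto coord1 (hnhdsWithin w (K0 a₁ a₂ b₁ b₂ ξ₁₀ ξ₂₀ R))
      (𝓝[eball ξ₁₀ R \ {ξ₁₀}] coord1 w) :=
  tendsto_nhdsWithin_iff.2 ⟨tendsto_coord1_hnhdsWithin _ _,
    (eventually_mem_hnhdsWithin _ _).mono fun _ => coord1_mem_of_mem_K0⟩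

theorem tendsto_coord2_K0 (w : HC) :
    Tendsto coord2 (hnhdsWithin w (K0 a₁ a₂ b₁ b₂ ξ₁₀ ξ₂₀ R))
      (𝓝[eball ξ₂₀ R \ {ξ₂₀}] coord2 w) :=
  tendsto_nhdsWithin_iff.2 ⟨tendsto_coord2_hnhdsWithin _ _,
    (eventually_mem_hnhdsWithin _ _).mono fun _ => coord2_mem_of_mem_K0⟩

end K0

theorem singularity_removable_general
    (a₁ a₂ b₁ b₂ : ℂ)
    (x₀ y₀ z₀ : ℝ) (R : ENNReal)
    (F₁ F₂ F₃ F₄ : ℂ → ℂ)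
    (Φ : HC → HC)
    (hΦ : ∀ x y z : ℝ,
      0 < ‖xi1 a₁ b₁ x y z - xi1 a₁ b₁ x₀ y₀ z₀‖ →
      ENNReal.ofReal (‖xi1 a₁ b₁ x y z - xi1 a₁ b₁ x₀ y₀ z₀‖) < R →
      0 < ‖xi2 a₂ b₂ x y z - xi2 a₂ b₂ x₀ y₀ z₀‖ →
      ENNReal.ofReal (‖xi2 a₂ b₂ x y z - xi2 a₂ b₂ x₀ y₀ z₀‖) < R →
      Φ (zeta a₁ a₂ b₁ b₂ x y z) =
        F₁ (xi1 a₁ b₁ x y z) • e1 + F₂ (xi2 a₂ b₂ x y z) • e2 +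
        F₃ (xi1 a₁ b₁ x y z) • e3 + F₄ (xi2 a₂ b₂ x y z) • e4)
    (a b c d : ℤ → ℂ)
    (ha : ∀ ξ : ℂ, 0 < ‖ξ - xi1 a₁ b₁ x₀ y₀ z₀‖ →
      ENNReal.ofReal (‖ξ - xi1 a₁ b₁ x₀ y₀ z₀‖) < R →
      HasSum (fun n : ℤ => a n * (ξ - xi1 a₁ b₁ x₀ y₀ z₀) ^ n) (F₁ ξ))
    (hc : ∀ ξ : ℂ, 0 < ‖ξ - xi1 a₁ b₁ x₀ y₀ z₀‖ →
      ENNReal.ofReal (‖ξ - xi1 a₁ b₁ x₀ y₀ z₀‖) < R →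
      HasSum (fun n : ℤ => c n * (ξ - xi1 a₁ b₁ x₀ y₀ z₀) ^ n) (F₃ ξ))
    (hb : ∀ ξ : ℂ, 0 < ‖ξ - xi2 a₂ b₂ x₀ y₀ z₀‖ →
      ENNReal.ofReal (‖ξ - xi2 a₂ b₂ x₀ y₀ z₀‖) < R →
      HasSum (fun n : ℤ => b n * (ξ - xi2 a₂ b₂ x₀ y₀ z₀) ^ n) (F₂ ξ))
    (hd : ∀ ξ : ℂ, 0 < ‖ξ - xi2 a₂ b₂ x₀ y₀ z₀‖ →
      ENNReal.ofReal (‖ξ - xi2 a₂ b₂ x₀ y₀ z₀‖) < R →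
      HasSum (fun n : ℤ => d n * (ξ - xi2 a₂ b₂ x₀ y₀ z₀) ^ n) (F₄ ξ))
    (hneg : ∀ n : ℤ, n < 0 → a n = 0 ∧ b n = 0 ∧ c n = 0 ∧ d n = 0) :
    ∀ u v t : ℝ, (xi1 a₁ b₁ u v t = 0 ∨ xi2 a₂ b₂ u v t = 0) →
      ENNReal.ofReal (‖xi1 a₁ b₁ u v t‖) < R →
      ENNReal.ofReal (‖xi2 a₂ b₂ u v t‖) < R →
      ∃ A : HC, TendstoAt Φ (K0 a₁ a₂ b₁ b₂ (xi1 a₁ b₁ x₀ y₀ z₀) (xi2 a₂ b₂ x₀ y₀ z₀) R)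
        (zeta a₁ a₂ b₁ b₂ x₀ y₀ z₀ + zeta a₁ a₂ b₁ b₂ u v t) A := by
  intro u v t _ hu₁ hu₂
  set w := zeta a₁ a₂ b₁ b₂ x₀ y₀ z₀ + zeta a₁ a₂ b₁ b₂ u v t
  have hw₁ : coord1 w ∈ eball (xi1 a₁ b₁ x₀ y₀ z₀) R := by
    rw [mem_eball_iff_ofReal_norm_sub]
    simpa [w, coord1_add] using hu₁
  have hw₂ : coord2 w ∈ eball (xi2 a₂ b₂ x₀ y₀ z₀) R := by
    rw [mem_eball_iff_ofReal_norm_sub]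
    simpa [w, coord2_add] using hu₂
  have hdisk {c ξ : ℂ} (hξ : ξ ∈ eball c R \ {c}) := mem_eball_diff_singleton_iff.1 hξ
  obtain ⟨L₁, hL₁⟩ := exists_tendsto_of_hasSum_laurent (fun n hn => (hneg n hn).1)
    (fun ξ hξ => ha ξ (hdisk hξ).1 (hdisk hξ).2) hw₁
  obtain ⟨L₂, hL₂⟩ := exists_tendsto_of_hasSum_laurent (fun n hn => (hneg n hn).2.1)
    (fun ξ hξ => hb ξ (hdisk hξ).1 (hdisk hξ).2) hw₂
  obtain ⟨L₃, hL₃⟩ := exists_tendsto_of_hasSum_laurent (fun n hn => (hneg n hn).2.2.1)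
    (fun ξ hξ => hc ξ (hdisk hξ).1 (hdisk hξ).2) hw₁
  obtain ⟨L₄, hL₄⟩ := exists_tendsto_of_hasSum_laurent (fun n hn => (hneg n hn).2.2.2)
    (fun ξ hξ => hd ξ (hdisk hξ).1 (hdisk hξ).2) hw₂
  refine ⟨ofECoords L₁ L₂ L₃ L₄, tendstoAt_ofECoords ?_ (hL₁.comp (tendsto_coord1_K0 w))
    (hL₂.comp (tendsto_coord2_K0 w)) (hL₃.comp (tendsto_coord1_K0 w))
    (hL₄.comp (tendsto_coord2_K0 w))⟩
  rintro _ ⟨x, y, z, rfl, h₁, h₁', h₂, h₂'⟩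
  simp only [Function.comp_apply, coord1_zeta, coord2_zeta]
  exact hΦ x y z h₁ h₁' h₂ h₂'

/-- Classification of singularities, removable case: if the Laurent
expansion of Φ has no principal part, then at every point w = ζ₀ + e* of K̃⁰_ζ with
e* ∈ L¹_ζ ∪ L²_ζ the mapping Φ has a finite limit as ζ → w, ζ ∈ K⁰_ζ. -/
theorem singularity_removable
    (a₁ a₂ b₁ b₂ : ℂ)
    (hind : ∀ α β γ : ℝ,
      (α : ℂ) • (1 : HC) + (β : ℂ) • i2 a₁ a₂ + (γ : ℂ) • i3 b₁ b₂ = 0 →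
        α = 0 ∧ β = 0 ∧ γ = 0)
    (hsurj1 : ∀ w : ℂ, ∃ x y z : ℝ, w = xi1 a₁ b₁ x y z)
    (hsurj2 : ∀ w : ℂ, ∃ x y z : ℝ, w = xi2 a₂ b₂ x y z)
    (x₀ y₀ z₀ : ℝ) (R : ENNReal) (hR : 0 < R)
    (F₁ F₂ F₃ F₄ : ℂ → ℂ)
    (hF₁ : DifferentiableOn ℂ F₁
      {ξ : ℂ | 0 < ‖ξ - xi1 a₁ b₁ x₀ y₀ z₀‖ ∧
        ENNReal.ofReal (‖ξ - xi1 a₁ b₁ x₀ y₀ z₀‖) < R})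
    (hF₃ : DifferentiableOn ℂ F₃
      {ξ : ℂ | 0 < ‖ξ - xi1 a₁ b₁ x₀ y₀ z₀‖ ∧
        ENNReal.ofReal (‖ξ - xi1 a₁ b₁ x₀ y₀ z₀‖) < R})
    (hF₂ : DifferentiableOn ℂ F₂
      {ξ : ℂ | 0 < ‖ξ - xi2 a₂ b₂ x₀ y₀ z₀‖ ∧
        ENNReal.ofReal (‖ξ - xi2 a₂ b₂ x₀ y₀ z₀‖) < R})
    (hF₄ : DifferentiableOn ℂ F₄
      {ξ : ℂ | 0 < ‖ξ - xi2 a₂ b₂ x₀ y₀ z₀‖ ∧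
        ENNReal.ofReal (‖ξ - xi2 a₂ b₂ x₀ y₀ z₀‖) < R})
    (Φ : HC → HC)
    (hΦ : ∀ x y z : ℝ,
      0 < ‖xi1 a₁ b₁ x y z - xi1 a₁ b₁ x₀ y₀ z₀‖ →
      ENNReal.ofReal (‖xi1 a₁ b₁ x y z - xi1 a₁ b₁ x₀ y₀ z₀‖) < R →
      0 < ‖xi2 a₂ b₂ x y z - xi2 a₂ b₂ x₀ y₀ z₀‖ →
      ENNReal.ofReal (‖xi2 a₂ b₂ x y z - xi2 a₂ b₂ x₀ y₀ z₀‖) < R →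
      Φ (zeta a₁ a₂ b₁ b₂ x y z) =
        F₁ (xi1 a₁ b₁ x y z) • e1 + F₂ (xi2 a₂ b₂ x y z) • e2 +
        F₃ (xi1 a₁ b₁ x y z) • e3 + F₄ (xi2 a₂ b₂ x y z) • e4)
    (a b c d : ℤ → ℂ)
    (ha : ∀ ξ : ℂ, 0 < ‖ξ - xi1 a₁ b₁ x₀ y₀ z₀‖ →
      ENNReal.ofReal (‖ξ - xi1 a₁ b₁ x₀ y₀ z₀‖) < R →
      HasSum (fun n : ℤ => a n * (ξ - xi1 a₁ b₁ x₀ y₀ z₀) ^ n) (F₁ ξ))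
    (hc : ∀ ξ : ℂ, 0 < ‖ξ - xi1 a₁ b₁ x₀ y₀ z₀‖ →
      ENNReal.ofReal (‖ξ - xi1 a₁ b₁ x₀ y₀ z₀‖) < R →
      HasSum (fun n : ℤ => c n * (ξ - xi1 a₁ b₁ x₀ y₀ z₀) ^ n) (F₃ ξ))
    (hb : ∀ ξ : ℂ, 0 < ‖ξ - xi2 a₂ b₂ x₀ y₀ z₀‖ →
      ENNReal.ofReal (‖ξ - xi2 a₂ b₂ x₀ y₀ z₀‖) < R →
      HasSum (fun n : ℤ => b n * (ξ - xi2 a₂ b₂ x₀ y₀ z₀) ^ n) (F₂ ξ))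
    (hd : ∀ ξ : ℂ, 0 < ‖ξ - xi2 a₂ b₂ x₀ y₀ z₀‖ →
      ENNReal.ofReal (‖ξ - xi2 a₂ b₂ x₀ y₀ z₀‖) < R →
      HasSum (fun n : ℤ => d n * (ξ - xi2 a₂ b₂ x₀ y₀ z₀) ^ n) (F₄ ξ))
    (hneg : ∀ n : ℤ, n < 0 → a n = 0 ∧ b n = 0 ∧ c n = 0 ∧ d n = 0) :
    ∀ u v t : ℝ, (xi1 a₁ b₁ u v t = 0 ∨ xi2 a₂ b₂ u v t = 0) →
      ENNReal.ofReal (‖xi1 a₁ b₁ u v t‖) < R →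
      ENNReal.ofReal (‖xi2 a₂ b₂ u v t‖) < R →
      ∃ A : HC, TendstoAt Φ (K0 a₁ a₂ b₁ b₂ (xi1 a₁ b₁ x₀ y₀ z₀) (xi2 a₂ b₂ x₀ y₀ z₀) R)
        (zeta a₁ a₂ b₁ b₂ x₀ y₀ z₀ + zeta a₁ a₂ b₁ b₂ u v t) A :=
  singularity_removable_general a₁ a₂ b₁ b₂ x₀ y₀ z₀ R F₁ F₂ F₃ F₄ Φ hΦ a b c d ha hc hb hd hneg
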